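/- Let Φ be a Drinfeld module in normal form with good reduction at a finite place v of K. For any z ∈ K̄ and any real number s with 0 < s < 1, there exist at most finitely many torsion points x of Φ with |z − x|_v < s. -/

import Mathlib

/-!
Write `|a|` for `v (alg a)`. Good reduction gives `Φ_a(x) = a x + O(|x| ^ q)` on the closed
unit disc, so on the disc `|x| ^ (q - 1) < |a|` the map `Φ_a` multiplies absolute values by
`|a|`. If some `b ≠ 0` has `|b| < 1`, iterating `Φ_b` contracts the disc `|x| < s` into the disc
for `b`, where `0` is the only torsion point; so the torsion points with `|x| < s` are roots of a
single `Φ_{b ^ N}`. If every `|a|` equals `1`, then `0` is the only torsion point with `|x| < 1`.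
Torsion points form a group, so a ball around `z` containing a torsion point `x₀` is handled by
translating by `x₀`.
-/

/-- A Drinfeld module of generic characteristic `Φ : F_q[t] → End(G_a)` over a field `K`,
recorded through the polynomials `Φ_a ∈ K[x]`: `Φ` is additive, turns multiplication into
composition, each `Φ_a` has zero constant term, linear coefficient the image of `a` under
the structure map `alg : F_q[t] → K` (generic characteristic: `alg` injective), positive
degree for `a ≠ 0`, and coefficients supported at `q`-power degrees (F_q-linearity). -/
structure DrinfeldModuleData (Fq K : Type*) [Field Fq] [Fintype Fq] [Field K] where
  toFun : Polynomial Fq → Polynomial K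
  alg : Polynomial Fq →+* K
  map_one' : toFun 1 = Polynomial.X
  map_add' : ∀ a b, toFun (a + b) = toFun a + toFun b
  map_mul' : ∀ a b, toFun (a * b) = (toFun a).comp (toFun b)
  coeff_zero' : ∀ a, (toFun a).coeff 0 = 0
  coeff_one' : ∀ a, (toFun a).coeff 1 = alg a
  degree_pos' : ∀ a, a ≠ 0 → 0 < (toFun a).natDegree
  supp_q_pow' : ∀ a i, (toFun a).coeff i ≠ 0 → ∃ k : ℕ, i = Fintype.card Fq ^ k
  alg_injective' : Function.Injective alg


open scoped Polynomial

lemma Fintype.card_sub_one_ne_zero (α : Type*) [Fintype α] [Nontrivial α] :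
    Fintype.card α - 1 ≠ 0 :=
  Nat.sub_ne_zero_of_lt Fintype.one_lt_card

lemma IsNonarchimedean.apply_eval_le_pow {K : Type*} [Field K] {v : AbsoluteValue K ℝ}
    (hv : IsNonarchimedean v) {P : K[X]} {n : ℕ} (hP : ∀ i, v (P.coeff i) ≤ 1)
    (hn : ∀ i ∈ P.support, n ≤ i) {x : K} (hx : v x ≤ 1) : v (P.eval x) ≤ v x ^ n := by
  rw [Polynomial.eval_eq_sum, Polynomial.sum_def]
  refine hv.apply_sum_le.trans (Real.iSup_le (fun ⟨i, hi⟩ => ?_) (by positivity))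
  calc v (P.coeff i * x ^ i) = v (P.coeff i) * v x ^ i := by rw [map_mul, map_pow]
    _ ≤ 1 * v x ^ n :=
      mul_le_mul (hP i) (pow_le_pow_of_le_one (v.nonneg x) hx (hn i hi)) (by positivity)
        zero_le_one
    _ = v x ^ n := one_mul _

namespace DrinfeldModuleData

variable {Fq K : Type*} [Field Fq] [Fintype Fq] [Field K]

section Algebra

variable (Φ : DrinfeldModuleData Fq K)

def IsTorsion (x : K) : Prop :=
  ∃ Q : Fq[X], Q ≠ 0 ∧ (Φ.toFun Q).eval x = 0

lemma toFun_ne_zero {a : Fq[X]} (ha : a ≠ 0) : Φ.toFun a ≠ 0 := by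
  intro h
  simpa [h] using Φ.degree_pos' a ha

lemma alg_ne_zero {a : Fq[X]} (ha : a ≠ 0) : Φ.alg a ≠ 0 :=
  (map_ne_zero_iff _ Φ.alg_injective').mpr ha

lemma eval_zero (a : Fq[X]) : (Φ.toFun a).eval 0 = 0 := by
  rw [← Polynomial.coeff_zero_eq_eval_zero, Φ.coeff_zero']

lemma eval_one (x : K) : (Φ.toFun 1).eval x = x := by
  rw [Φ.map_one', Polynomial.eval_X]

lemma eval_mul (a b : Fq[X]) (x : K) :
    (Φ.toFun (a * b)).eval x = (Φ.toFun a).eval ((Φ.toFun b).eval x) := by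
  rw [Φ.map_mul', Polynomial.eval_comp]

lemma eval_comm (a b : Fq[X]) (x : K) :
    (Φ.toFun a).eval ((Φ.toFun b).eval x) = (Φ.toFun b).eval ((Φ.toFun a).eval x) := by
  rw [← eval_mul, mul_comm, eval_mul]

/-- `Φ_a` only has monomials of degree `q ^ k`, and `x ↦ x ^ q ^ k` is additive because `K`
has the characteristic `p` of `F_q`, with `q` a power of `p`. -/
lemma eval_sub (a : Fq[X]) (x y : K) :
    (Φ.toFun a).eval (x - y) = (Φ.toFun a).eval x - (Φ.toFun a).eval y := by
  obtain ⟨n, hp, hcard⟩ := FiniteField.card Fq (ringChar Fq)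
  have : Fact (ringChar Fq).Prime := ⟨hp⟩
  have : CharP K (ringChar Fq) :=
    charP_of_injective_ringHom (Φ.alg.comp Polynomial.C).injective (ringChar Fq)
  simp only [Polynomial.eval_eq_sum, Polynomial.sum_def, ← Finset.sum_sub_distrib]
  refine Finset.sum_congr rfl fun i hi => ?_
  obtain ⟨k, rfl⟩ := Φ.supp_q_pow' a i (Polynomial.mem_support_iff.mp hi)
  rw [hcard, ← pow_mul, sub_pow_char_pow, mul_sub]

variable {Φ}

lemma IsTorsion.eval {x : K} (hx : Φ.IsTorsion x) (b : Fq[X]) :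
    Φ.IsTorsion ((Φ.toFun b).eval x) := by
  obtain ⟨Q, hQ, hQx⟩ := hx
  exact ⟨Q, hQ, by rw [eval_comm, hQx, eval_zero]⟩

lemma IsTorsion.sub {x y : K} (hx : Φ.IsTorsion x) (hy : Φ.IsTorsion y) :
    Φ.IsTorsion (x - y) := by
  obtain ⟨Q, hQ, hQx⟩ := hx
  obtain ⟨R, hR, hRy⟩ := hy
  refine ⟨Q * R, mul_ne_zero hQ hR, ?_⟩
  rw [eval_sub, eval_mul Φ Q R y, hRy, eval_zero, mul_comm, eval_mul, hQx, eval_zero, sub_self]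

end Algebra

def IsIntegralAt (Φ : DrinfeldModuleData Fq K) (v : AbsoluteValue K ℝ) : Prop :=
  ∀ a i, v ((Φ.toFun a).coeff i) ≤ 1

variable {Φ : DrinfeldModuleData Fq K} {v : AbsoluteValue K ℝ}

lemma IsIntegralAt.abv_alg_le_one (hΦ : Φ.IsIntegralAt v) (a : Fq[X]) : v (Φ.alg a) ≤ 1 :=
  Φ.coeff_one' a ▸ hΦ a 1

lemma abv_eval_sub_alg_mul_le (hv : IsNonarchimedean v) (hΦ : Φ.IsIntegralAt v) (a : Fq[X])
    {x : K} (hx : v x ≤ 1) :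
    v ((Φ.toFun a).eval x - Φ.alg a * x) ≤ v x ^ (Fintype.card Fq - 1) * v x := by
  set R := Φ.toFun a - Polynomial.C (Φ.alg a) * Polynomial.X
  have hcoeff : ∀ i, R.coeff i = if i = 1 then 0 else (Φ.toFun a).coeff i := by
    intro i
    rw [Polynomial.coeff_sub, Polynomial.coeff_C_mul_X]
    split_ifs with h
    · rw [h, Φ.coeff_one', sub_self]
    · rw [sub_zero]
  have hle : ∀ i, v (R.coeff i) ≤ 1 := by
    intro i
    rw [hcoeff]
    split_ifs
    exacts [by simp, hΦ a i]
  have hsupp : ∀ i ∈ R.support, Fintype.card Fq ≤ i := by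
    intro i hi
    rw [Polynomial.mem_support_iff, hcoeff] at hi
    split_ifs at hi with h1
    · exact absurd rfl hi
    obtain ⟨k, rfl⟩ := Φ.supp_q_pow' a i hi
    have hk : k ≠ 0 := by rintro rfl; exact h1 (pow_zero _)
    exact Nat.le_self_pow hk _
  rw [← pow_succ, Nat.sub_add_cancel Fintype.card_pos]
  simpa [R] using hv.apply_eval_le_pow hle hsupp hx

lemma abv_eval_le (hv : IsNonarchimedean v) (hΦ : Φ.IsIntegralAt v) (a : Fq[X]) {x : K}
    (hx : v x ≤ 1) :
    v ((Φ.toFun a).eval x) ≤ max (v (Φ.alg a)) (v x ^ (Fintype.card Fq - 1)) * v x := by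
  have h := hv (Φ.alg a * x) ((Φ.toFun a).eval x - Φ.alg a * x)
  rw [add_sub_cancel] at h
  rw [max_mul_of_nonneg _ _ (v.nonneg x), ← map_mul]
  exact h.trans (max_le_max le_rfl (abv_eval_sub_alg_mul_le hv hΦ a hx))

lemma abv_eval_eq (hv : IsNonarchimedean v) (hΦ : Φ.IsIntegralAt v) {a : Fq[X]} {x : K}
    (hx : v x ^ (Fintype.card Fq - 1) < v (Φ.alg a)) :
    v ((Φ.toFun a).eval x) = v (Φ.alg a) * v x := by
  rcases eq_or_ne x 0 with rfl | hx0
  · simp [eval_zero]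
  have hx1 : v x < 1 := (pow_lt_one_iff_of_nonneg (v.nonneg x)
    (Fintype.card_sub_one_ne_zero Fq)).mp (hx.trans_le (hΦ.abv_alg_le_one a))
  have hrem : v ((Φ.toFun a).eval x - Φ.alg a * x) < v (Φ.alg a * x) := by
    rw [map_mul]
    exact (abv_eval_sub_alg_mul_le hv hΦ a hx1.le).trans_lt
      (mul_lt_mul_of_pos_right hx (v.pos hx0))
  rw [← map_mul, ← hv.add_eq_left_of_lt hrem, add_sub_cancel]

lemma eq_zero_of_eval_eq_zero (hv : IsNonarchimedean v) (hΦ : Φ.IsIntegralAt v) {a : Fq[X]}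
    {x : K} (h : (Φ.toFun a).eval x = 0) (hx : v x ^ (Fintype.card Fq - 1) < v (Φ.alg a)) :
    x = 0 := by
  have hva : v (Φ.alg a) ≠ 0 := ((pow_nonneg (v.nonneg x) _).trans_lt hx).ne'
  have := abv_eval_eq hv hΦ hx
  rw [h, map_zero, eq_comm, mul_eq_zero] at this
  exact v.eq_zero.mp (this.resolve_left hva)

/-- Otherwise the orbit `Φ_{b ^ k}(x)` would have the pairwise distinct absolute values
`|b| ^ k * |x|`, whereas a torsion point has a finite orbit. -/
lemma IsTorsion.eq_zero (hv : IsNonarchimedean v) (hΦ : Φ.IsIntegralAt v) {x : K}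
    (hx : Φ.IsTorsion x) {b : Fq[X]} (hb : v (Φ.alg b) < 1)
    (hxb : v x ^ (Fintype.card Fq - 1) < v (Φ.alg b)) : x = 0 := by
  obtain ⟨Q, hQ, hQx⟩ := hx
  by_contra hx0
  have hβ : 0 < v (Φ.alg b) := (pow_nonneg (v.nonneg x) _).trans_lt hxb
  let y : ℕ → K := fun k => (Φ.toFun (b ^ k)).eval x
  have hy : ∀ k, v (y k) = v (Φ.alg b) ^ k * v x := by
    intro k
    induction k with
    | zero => simp [y, eval_one]
    | succ k ih =>
      have hyk : v (y k) ^ (Fintype.card Fq - 1) < v (Φ.alg b) := by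
        refine lt_of_le_of_lt (pow_le_pow_left₀ (v.nonneg _) ?_ _) hxb
        rw [ih]
        exact mul_le_of_le_one_left (v.nonneg x) (pow_le_one₀ hβ.le hb.le)
      change v ((Φ.toFun (b ^ (k + 1))).eval x) = _
      rw [pow_succ', eval_mul, abv_eval_eq hv hΦ hyk, ih, pow_succ', mul_assoc]
  have hinj : Function.Injective y := fun i j hij => by
    have := congrArg v hij
    rw [hy, hy] at this
    exact pow_right_injective₀ hβ hb.ne (mul_right_cancel₀ (v.ne_zero hx0) this)
  refine Set.infinite_of_injective_forall_mem hinj (fun k => ?_)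
    (Polynomial.finite_setOfPred_isRoot (Φ.toFun_ne_zero hQ))
  change (Φ.toFun Q).eval ((Φ.toFun (b ^ k)).eval x) = 0
  rw [eval_comm, hQx, eval_zero]

lemma abv_eval_pow_le (hv : IsNonarchimedean v) (hΦ : Φ.IsIntegralAt v) (b : Fq[X]) {s : ℝ}
    (hs0 : 0 ≤ s) (hs1 : s ≤ 1) {x : K} (hx : v x ≤ s) (k : ℕ) :
    v ((Φ.toFun (b ^ k)).eval x) ≤ max (v (Φ.alg b)) (s ^ (Fintype.card Fq - 1)) ^ k * v x := by
  set c := max (v (Φ.alg b)) (s ^ (Fintype.card Fq - 1))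
  have hc0 : 0 ≤ c := (v.nonneg _).trans (le_max_left _ _)
  have hc1 : c ≤ 1 := max_le (hΦ.abv_alg_le_one b) (pow_le_one₀ hs0 hs1)
  induction k with
  | zero => simp [eval_one]
  | succ k ih =>
    set y := (Φ.toFun (b ^ k)).eval x
    have hys : v y ≤ s :=
      ih.trans ((mul_le_of_le_one_left (v.nonneg x) (pow_le_one₀ hc0 hc1)).trans hx)
    calc v ((Φ.toFun (b ^ (k + 1))).eval x)
        ≤ max (v (Φ.alg b)) (v y ^ (Fintype.card Fq - 1)) * v y := by
          rw [pow_succ', eval_mul]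
          exact abv_eval_le hv hΦ b (hys.trans hs1)
      _ ≤ c * (c ^ k * v x) :=
          mul_le_mul (max_le_max le_rfl (pow_le_pow_left₀ (v.nonneg _) hys _)) ih (v.nonneg _) hc0
      _ = c ^ (k + 1) * v x := by ring

lemma finite_setOf_isTorsion_abv_lt (hv : IsNonarchimedean v) (hΦ : Φ.IsIntegralAt v) {s : ℝ}
    (hs0 : 0 ≤ s) (hs1 : s < 1) : {x : K | Φ.IsTorsion x ∧ v x < s}.Finite := by
  have hq1 := Fintype.card_sub_one_ne_zero Fq
  by_cases hsmall : ∃ b : Fq[X], b ≠ 0 ∧ v (Φ.alg b) < 1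
  · obtain ⟨b, hb0, hb1⟩ := hsmall
    have hβ : 0 < v (Φ.alg b) := v.pos (Φ.alg_ne_zero hb0)
    obtain ⟨N, hN⟩ := exists_pow_lt_of_lt_one hβ
      (max_lt hb1 (pow_lt_one₀ hs0 hs1 hq1) : max (v (Φ.alg b)) (s ^ (Fintype.card Fq - 1)) < 1)
    refine (Polynomial.finite_setOfPred_isRoot (Φ.toFun_ne_zero (pow_ne_zero N hb0))).subset ?_
    rintro x ⟨hx, hxs⟩
    have hyN : v ((Φ.toFun (b ^ N)).eval x) < v (Φ.alg b) :=
      (abv_eval_pow_le hv hΦ b hs0 hs1.le hxs.le N).trans_lt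
        ((mul_le_of_le_one_right (pow_nonneg ((v.nonneg _).trans (le_max_left _ _)) N)
          (hxs.trans hs1).le).trans_lt hN)
    exact (hx.eval (b ^ N)).eq_zero hv hΦ hb1
      ((pow_le_of_le_one (v.nonneg _) (hyN.trans hb1).le hq1).trans_lt hyN)
  · push Not at hsmall
    refine (Set.finite_singleton (0 : K)).subset ?_
    rintro x ⟨⟨Q, hQ, hQx⟩, hxs⟩
    exact eq_zero_of_eval_eq_zero hv hΦ hQx
      ((pow_lt_one₀ (v.nonneg x) (hxs.trans hs1) hq1).trans_le (hsmall Q hQ))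

lemma finite_setOf_isTorsion_abv_sub_lt (hv : IsNonarchimedean v) (hΦ : Φ.IsIntegralAt v)
    (z : K) {s : ℝ} (hs1 : s < 1) : {x : K | Φ.IsTorsion x ∧ v (z - x) < s}.Finite := by
  rcases Set.eq_empty_or_nonempty {x : K | Φ.IsTorsion x ∧ v (z - x) < s} with
    h | ⟨x₀, hx₀, hzx₀⟩
  · rw [h]
    exact Set.finite_empty
  have hs0 : 0 ≤ s := (v.nonneg _).trans hzx₀.le
  refine ((finite_setOf_isTorsion_abv_lt hv hΦ hs0 hs1).preimage
    (sub_left_injective (b := x₀)).injOn).subset ?_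
  rintro x ⟨hx, hzx⟩
  refine ⟨hx.sub hx₀, ?_⟩
  calc v (x - x₀) = v ((z - x₀) + -(z - x)) := by ring_nf
    _ ≤ max (v (z - x₀)) (v (-(z - x))) := hv _ _
    _ < s := max_lt hzx₀ (by rwa [map_neg_eq_map])

end DrinfeldModuleData

theorem stmt_5_general (Fq K : Type*) [Field Fq] [Fintype Fq] [Field K]
    (Φ : DrinfeldModuleData Fq K)
    (v : AbsoluteValue K ℝ)
    (hna : ∀ x y : K, v (x + y) ≤ max (v x) (v y))
    (hgood : ∀ (a : Polynomial Fq) (i : ℕ), v ((Φ.toFun a).coeff i) ≤ 1)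
    (z : K) (s : ℝ) (hs1 : s < 1) :
    {x : K | (∃ Q : Polynomial Fq, Q ≠ 0 ∧ (Φ.toFun Q).eval x = 0) ∧ v (z - x) < s}.Finite := by
  exact Φ.finite_setOf_isTorsion_abv_sub_lt hna hgood z hs1

/-- Let `Φ` be a Drinfeld module in normal form with good reduction at a finite
place `v`. For any `z` and any real `s` with `0 < s < 1`, there are at most finitely many
torsion points `x` of `Φ` with `|z − x|_v < s`. -/
theorem stmt_5 (Fq K : Type*) [Field Fq] [Fintype Fq] [Field K]
    (Φ : DrinfeldModuleData Fq K)
    (v : AbsoluteValue K ℝ)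
    (hna : ∀ x y : K, v (x + y) ≤ max (v x) (v y))
    (hgood : ∀ (a : Polynomial Fq) (i : ℕ), v ((Φ.toFun a).coeff i) ≤ 1)
    (hmonic : ∀ a : Polynomial Fq, a ≠ 0 → v ((Φ.toFun a).leadingCoeff) = 1)
    (z : K) (s : ℝ) (hs0 : 0 < s) (hs1 : s < 1) :
    {x : K | (∃ Q : Polynomial Fq, Q ≠ 0 ∧ (Φ.toFun Q).eval x = 0) ∧ v (z - x) < s}.Finite :=
  stmt_5_general Fq K Φ v hna hgood z s hs1
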